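/- arXiv:0711.0765 — 2 statements merged into one kernel-verified Lean document; each statement's English description precedes it below -/
import Mathlib

section
/- Let p be a prime and a, b integers with 0 < a, b < p, and let a' be the inverse of a mod p with 0 < a' < p. Then -(a/b)·Σ_{i=1}^{p-1}[b·i/p]² - (b/a)·Σ_{i=1}^{p-1}[a·i/p]² + 2·Σ_{i=1}^{p-1}[a·i/p][b·i/p] = ((1-p)/(6abp))·(a²(2p-1) + b²(2p-1) - 3abp) + 2·s(a'b, p), where a'b is reduced modulo p to lie in {1,...,p-1}. -/
/-!
Write `⌊c i / p⌋ = c i / p - 1/2 - ((c i / p))`.  The quadratic form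
`-(a/b) Y² - (b/a) X² + 2 X Y = -(a Y - b X)² / (a b)` cancels the parts linear in `i`, leaving a
quadratic expression in the sawtooth values `((a i / p))` and `((b i / p))`.  As `i ↦ a i` permutes
the nonzero residues mod `p`, their sums are those of `((i / p)) = i / p - 1/2`, namely `0` and
`(p - 1)(p - 2) / (12 p)`, and the mixed sum is `s(a' b, p)` because `a i · a' b ≡ b i`.
-/

/-- The sawtooth function `((x)) = x - ⌊x⌋ - 1/2` for non-integer `x`, and `0` for integer `x`. -/
def saw (x : ℚ) : ℚ := if x.den = 1 then 0 else x - ⌊x⌋ - 1/2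

/-- The Dedekind sum `s(q,p) = Σ_{i=1}^{p-1} ((i/p))((iq/p))`.  It depends on `q` only
through its residue class modulo `p`. -/
noncomputable def dedekindSum (q p : ℤ) : ℚ :=
  ∑ i ∈ Finset.Icc (1 : ℤ) (p - 1), saw ((i : ℚ) / p) * saw ((i * q : ℚ) / p)

open Finset

theorem Function.Periodic.eq_of_modEq {α : Type*} {F : ℤ → α} {n m m' : ℤ}
    (hF : Function.Periodic F n) (h : m ≡ m' [ZMOD n]) : F m = F m' := by
  obtain ⟨k, hk⟩ := h.dvd
  rw [show m' = m + k * n by linarith]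
  exact (hF.int_mul k m).symm

theorem Int.isCoprime_of_mul_modEq_one {n a a' : ℤ} (h : a * a' ≡ 1 [ZMOD n]) :
    IsCoprime a n := by
  obtain ⟨k, hk⟩ := h.dvd
  exact ⟨a', k, by linarith⟩

section Reindex

variable {n : ℕ} {u c i : ℤ}

theorem emod_mul_emod_of_mul_modEq_one (h : u * c ≡ 1 [ZMOD n]) (hi : i ∈ Icc 1 ((n : ℤ) - 1)) :
    u * (c * i % n) % n = i := by
  rw [mem_Icc] at hi
  have hmod : u * (c * i % n) ≡ i [ZMOD n] :=
    ((Int.mod_modEq _ _).mul_left u).trans (by simpa [mul_assoc] using h.mul_right i)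
  rw [hmod.eq, Int.emod_eq_of_lt (by omega) (by omega)]

theorem emod_mem_Icc_of_mul_modEq_one (h : u * c ≡ 1 [ZMOD n]) (hi : i ∈ Icc 1 ((n : ℤ) - 1)) :
    c * i % n ∈ Icc 1 ((n : ℤ) - 1) := by
  have hback := emod_mul_emod_of_mul_modEq_one h hi
  rw [mem_Icc] at hi ⊢
  have hn : (0 : ℤ) < n := by omega
  have hne : c * i % n ≠ 0 := fun h0 => by simp [h0] at hback; omega
  have := Int.emod_nonneg (c * i) hn.ne'
  have := Int.emod_lt_of_pos (c * i) hn
  omega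

theorem sum_Icc_comp_mul_of_isCoprime {M : Type*} [AddCommMonoid M] (hc : IsCoprime c n)
    {F : ℤ → M} (hF : Function.Periodic F n) :
    ∑ i ∈ Icc 1 ((n : ℤ) - 1), F (c * i) = ∑ i ∈ Icc 1 ((n : ℤ) - 1), F i := by
  obtain ⟨u, v, huv⟩ := hc
  have hu : u * c ≡ 1 [ZMOD n] := Int.modEq_iff_dvd.mpr ⟨v, by linarith⟩
  have hc' : c * u ≡ 1 [ZMOD n] := by rwa [mul_comm]
  exact sum_nbij' (fun i => c * i % n) (fun j => u * j % n)
    (fun _ => emod_mem_Icc_of_mul_modEq_one hu) (fun _ => emod_mem_Icc_of_mul_modEq_one hc')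
    (fun _ => emod_mul_emod_of_mul_modEq_one hu) (fun _ => emod_mul_emod_of_mul_modEq_one hc')
    fun i _ => hF.eq_of_modEq (Int.mod_modEq _ _).symm

end Reindex

theorem sum_Icc_one_sub_one_eq_sum_range {M : Type*} [AddCommMonoid M] (n : ℕ) (f : ℤ → M) :
    ∑ i ∈ Icc 1 ((n : ℤ) - 1), f i = ∑ k ∈ range (n - 1), f (k + 1) := by
  rw [Int.Icc_eq_finset_map, sum_map, show ((n : ℤ) - 1 + 1 - 1).toNat = n - 1 by omega]
  exact sum_congr rfl fun k _ => by simp [add_comm]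

theorem sum_range_succ_div_sub {K : Type*} [Field K] [CharZero K] (m : ℕ) (d c : K) :
    ∑ k ∈ range m, (((k : K) + 1) / d - c) = m * (m + 1) / (2 * d) - m * c := by
  induction m with
  | zero => simp
  | succ m ih => rw [sum_range_succ, ih]; push_cast; ring

theorem sum_range_succ_div_sub_sq {K : Type*} [Field K] [CharZero K] (m : ℕ) (d c : K) :
    ∑ k ∈ range m, (((k : K) + 1) / d - c) ^ 2 =
      m * (m + 1) * (2 * m + 1) / (6 * d ^ 2) - m * (m + 1) * c / d + m * c ^ 2 := by
  induction m with
  | zero => simp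
  | succ m ih => rw [sum_range_succ, ih]; push_cast; ring

theorem card_Icc_one_sub_one (n : ℕ) : #(Icc 1 ((n : ℤ) - 1)) = n - 1 := by
  rw [Int.card_Icc]; omega

theorem not_dvd_of_mem_Icc {n : ℕ} {i : ℤ} (hi : i ∈ Icc 1 ((n : ℤ) - 1)) : ¬ (n : ℤ) ∣ i := by
  rw [mem_Icc] at hi
  exact fun h => by have := Int.eq_zero_of_dvd_of_nonneg_of_lt (by omega) (by omega) h; omega

theorem periodic_saw : Function.Periodic saw 1 := fun x => by
  have hden : (x + 1).den = x.den := by exact_mod_cast Rat.add_intCast_den x 1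
  simp only [saw, hden, Int.floor_add_one]
  split_ifs <;> push_cast <;> ring

theorem periodic_saw_intCast_div (n : ℕ) : Function.Periodic (fun m : ℤ => saw (m / n)) n := by
  intro m
  rcases eq_or_ne n 0 with rfl | hn
  · simp
  · simpa [add_div, div_self (Nat.cast_ne_zero.mpr hn : (n : ℚ) ≠ 0)] using periodic_saw (m / n : ℚ)

theorem floor_intCast_div_eq_sub_saw {n : ℕ} {m : ℤ} (hn : n ≠ 0) (h : ¬ (n : ℤ) ∣ m) :
    (⌊(m / n : ℚ)⌋ : ℚ) = m / n - 1 / 2 - saw (m / n) := by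
  have hden : ((m : ℚ) / n).den ≠ 1 := by
    simpa using (Rat.den_div_intCast_eq_one_iff m n (by exact_mod_cast hn)).not.mpr h
  rw [saw, if_neg hden]
  ring

theorem saw_div_of_mem_Icc {n : ℕ} {i : ℤ} (hi : i ∈ Icc 1 ((n : ℤ) - 1)) :
    saw (i / n) = i / n - 1 / 2 := by
  have hfloor := floor_intCast_div_eq_sub_saw (by rw [mem_Icc] at hi; omega) (not_dvd_of_mem_Icc hi)
  rw [mem_Icc] at hi
  have hn : (0 : ℚ) < n := by exact_mod_cast (by omega : (0 : ℤ) < n)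
  have hi0 : (0 : ℚ) ≤ i := by exact_mod_cast (by omega : (0 : ℤ) ≤ i)
  have hin : (i : ℚ) < n := by exact_mod_cast (by omega : i < n)
  rw [Int.floor_eq_zero_iff.mpr ⟨by positivity, (div_lt_one hn).mpr hin⟩] at hfloor
  push_cast at hfloor
  linarith

theorem sum_saw_div (n : ℕ) : ∑ i ∈ Icc 1 ((n : ℤ) - 1), saw (i / n) = 0 := by
  rcases Nat.eq_zero_or_pos n with rfl | hn
  · simp
  rw [sum_congr rfl fun i hi => saw_div_of_mem_Icc hi, sum_Icc_one_sub_one_eq_sum_range]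
  push_cast
  rw [sum_range_succ_div_sub, Nat.cast_pred hn]
  field_simp
  ring

theorem sum_saw_div_sq (n : ℕ) :
    ∑ i ∈ Icc 1 ((n : ℤ) - 1), saw (i / n) ^ 2 = (n - 1) * (n - 2) / (12 * n) := by
  rcases Nat.eq_zero_or_pos n with rfl | hn
  · simp
  rw [sum_congr rfl fun i hi => by rw [saw_div_of_mem_Icc hi], sum_Icc_one_sub_one_eq_sum_range]
  push_cast
  rw [sum_range_succ_div_sub_sq, Nat.cast_pred hn]
  field_simp
  ring

section CoprimeSums

variable {n : ℕ} {a c a' : ℤ}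

theorem sum_saw_mul_div (hc : IsCoprime c n) :
    ∑ i ∈ Icc 1 ((n : ℤ) - 1), saw (c * i / n) = 0 := by
  have := sum_Icc_comp_mul_of_isCoprime hc (periodic_saw_intCast_div n)
  push_cast at this
  rw [this, sum_saw_div]

theorem sum_saw_mul_div_sq (hc : IsCoprime c n) :
    ∑ i ∈ Icc 1 ((n : ℤ) - 1), saw (c * i / n) ^ 2 = (n - 1) * (n - 2) / (12 * n) := by
  have := sum_Icc_comp_mul_of_isCoprime hc ((periodic_saw_intCast_div n).comp (· ^ 2))
  simp only [Function.comp_def, Int.cast_mul] at this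
  rw [this, sum_saw_div_sq]

theorem sum_saw_mul_saw_eq_dedekindSum (hinv : a * a' ≡ 1 [ZMOD n]) (b : ℤ) :
    ∑ i ∈ Icc 1 ((n : ℤ) - 1), saw (a * i / n) * saw (b * i / n) = dedekindSum (a' * b) n := by
  have hsaw := periodic_saw_intCast_div n
  have hscaled : Function.Periodic (fun m : ℤ => saw ((m * (a' * b) : ℤ) / n)) n := fun m => by
    simpa [add_mul, mul_comm (n : ℤ)] using hsaw.int_mul (a' * b) (m * (a' * b))
  have hb : ∀ i : ℤ, saw (b * i / n) = saw ((a * i * (a' * b) : ℤ) / n) := fun i => by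
    have hmod : a * i * (a' * b) ≡ b * i [ZMOD n] := by
      simpa [mul_assoc, mul_comm, mul_left_comm] using hinv.mul_right (b * i)
    simpa using hsaw.eq_of_modEq hmod.symm
  have := sum_Icc_comp_mul_of_isCoprime (Int.isCoprime_of_mul_modEq_one hinv)
    (hsaw.mul hscaled)
  simp only [Pi.mul_apply, Int.cast_mul] at this hb
  simp only [hb, this, dedekindSum, Int.cast_mul, Int.cast_natCast]

end CoprimeSums

theorem neg_div_mul_sq_sub_div_mul_sq_add_two_mul {K : Type*} [Field K] {a b : K} (ha : a ≠ 0)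
    (hb : b ≠ 0) (X Y : K) :
    -(a / b) * Y ^ 2 - b / a * X ^ 2 + 2 * (X * Y) = -(a * Y - b * X) ^ 2 / (a * b) := by
  field_simp
  ring

theorem sum_add_mul_sub_mul_sq {R ι : Type*} [CommRing R] (s : Finset ι) (c α β : R)
    (x y : ι → R) :
    ∑ i ∈ s, (c + β * x i - α * y i) ^ 2 =
      #s * c ^ 2 + 2 * c * (β * ∑ i ∈ s, x i - α * ∑ i ∈ s, y i) + β ^ 2 * ∑ i ∈ s, x i ^ 2 +
        α ^ 2 * ∑ i ∈ s, y i ^ 2 - 2 * α * β * ∑ i ∈ s, x i * y i := by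
  have hexpand : ∀ i ∈ s, (c + β * x i - α * y i) ^ 2 = c ^ 2 + 2 * c * β * x i -
      2 * c * α * y i + β ^ 2 * x i ^ 2 + α ^ 2 * y i ^ 2 - 2 * α * β * (x i * y i) :=
    fun i _ => by ring
  simp only [sum_congr rfl hexpand, sum_add_distrib, sum_sub_distrib, ← mul_sum, sum_const,
    nsmul_eq_mul]
  ring

theorem sum_floor_quadratic_form_eq {n : ℕ} {a b a' : ℤ} (ha : a ≠ 0) (hb : b ≠ 0)
    (hbn : IsCoprime b n) (hinv : a * a' ≡ 1 [ZMOD n]) :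
    -((a : ℚ) / b) * (∑ i ∈ Icc (1 : ℤ) ((n : ℤ) - 1), (⌊(b * i : ℚ) / n⌋ : ℚ) ^ 2) -
        ((b : ℚ) / a) * (∑ i ∈ Icc (1 : ℤ) ((n : ℤ) - 1), (⌊(a * i : ℚ) / n⌋ : ℚ) ^ 2) +
        2 * ∑ i ∈ Icc (1 : ℤ) ((n : ℤ) - 1), (⌊(a * i : ℚ) / n⌋ : ℚ) * (⌊(b * i : ℚ) / n⌋ : ℚ) =
      ((1 - (n : ℚ)) / (6 * a * b * n)) *
          ((a : ℚ) ^ 2 * (2 * n - 1) + (b : ℚ) ^ 2 * (2 * n - 1) - 3 * a * b * n) +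
        2 * dedekindSum (a' * b) n := by
  have han := Int.isCoprime_of_mul_modEq_one hinv
  have hfloor : ∀ {c : ℤ}, IsCoprime c n → ∀ i ∈ Icc 1 ((n : ℤ) - 1),
      (⌊(c * i : ℚ) / n⌋ : ℚ) = c * (i / n) - 1 / 2 - saw (c * i / n) := fun {c} hc i hi => by
    have hdvd : ¬ (n : ℤ) ∣ c * i := fun h => not_dvd_of_mem_Icc hi (hc.symm.dvd_of_dvd_mul_left h)
    have := floor_intCast_div_eq_sub_saw (by rw [mem_Icc] at hi; omega) hdvd
    push_cast at this
    rw [this]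
    ring
  have hterm : ∀ i ∈ Icc 1 ((n : ℤ) - 1),
      -((a : ℚ) / b) * (⌊(b * i : ℚ) / n⌋ : ℚ) ^ 2 - (b : ℚ) / a * (⌊(a * i : ℚ) / n⌋ : ℚ) ^ 2 +
          2 * ((⌊(a * i : ℚ) / n⌋ : ℚ) * (⌊(b * i : ℚ) / n⌋ : ℚ)) =
        -(((b : ℚ) - a) / 2 + b * saw (a * i / n) - a * saw (b * i / n)) ^ 2 / (a * b) :=
    fun i hi => by
      rw [neg_div_mul_sq_sub_div_mul_sq_add_two_mul (by exact_mod_cast ha) (by exact_mod_cast hb),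
        hfloor han i hi, hfloor hbn i hi]
      ring
  calc _ = ∑ i ∈ Icc 1 ((n : ℤ) - 1),
          -(((b : ℚ) - a) / 2 + b * saw (a * i / n) - a * saw (b * i / n)) ^ 2 / (a * b) := by
        rw [← sum_congr rfl hterm]
        simp only [mul_sum, sum_add_distrib, sum_sub_distrib]
    _ = _ := by
        rw [← sum_div, sum_neg_distrib, sum_add_mul_sub_mul_sq, sum_saw_mul_div han,
          sum_saw_mul_div hbn, sum_saw_mul_div_sq han, sum_saw_mul_div_sq hbn,
          sum_saw_mul_saw_eq_dedekindSum hinv, card_Icc_one_sub_one]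
        rcases n.eq_zero_or_pos with rfl | hn
        · simp [dedekindSum]
        rw [Nat.cast_pred hn]
        field_simp
        ring

theorem stmt8_general (p : ℕ) (hp : p.Prime) (a b a' : ℤ)
    (ha0 : 0 < a) (hb0 : 0 < b) (hbp : b < p)
    (hinv : a * a' ≡ 1 [ZMOD (p : ℤ)]) :
    -((a : ℚ) / b) * (∑ i ∈ Finset.Icc (1 : ℤ) ((p : ℤ) - 1), (⌊(b * i : ℚ) / p⌋ : ℚ) ^ 2) -
        ((b : ℚ) / a) * (∑ i ∈ Finset.Icc (1 : ℤ) ((p : ℤ) - 1), (⌊(a * i : ℚ) / p⌋ : ℚ) ^ 2) +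
        2 * ∑ i ∈ Finset.Icc (1 : ℤ) ((p : ℤ) - 1),
              (⌊(a * i : ℚ) / p⌋ : ℚ) * (⌊(b * i : ℚ) / p⌋ : ℚ) =
      ((1 - (p : ℚ)) / (6 * a * b * p)) *
          ((a : ℚ) ^ 2 * (2 * p - 1) + (b : ℚ) ^ 2 * (2 * p - 1) - 3 * a * b * p) +
        2 * dedekindSum (a' * b) p := by
  have hpb : ¬ (p : ℤ) ∣ b := fun h => hb0.ne' (Int.eq_zero_of_dvd_of_nonneg_of_lt hb0.le hbp h)
  have hb : IsCoprime b p := ((Nat.prime_iff_prime_int.mp hp).coprime_iff_not_dvd.mpr hpb).symm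
  exact sum_floor_quadratic_form_eq ha0.ne' hb0.ne' hb hinv

theorem stmt8 (p : ℕ) (hp : p.Prime) (a b a' : ℤ)
    (ha0 : 0 < a) (hap : a < p) (hb0 : 0 < b) (hbp : b < p)
    (ha'0 : 0 < a') (ha'p : a' < p) (hinv : a * a' ≡ 1 [ZMOD (p : ℤ)]) :
    -((a : ℚ) / b) * (∑ i ∈ Finset.Icc (1 : ℤ) ((p : ℤ) - 1), (⌊(b * i : ℚ) / p⌋ : ℚ) ^ 2) -
        ((b : ℚ) / a) * (∑ i ∈ Finset.Icc (1 : ℤ) ((p : ℤ) - 1), (⌊(a * i : ℚ) / p⌋ : ℚ) ^ 2) +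
        2 * ∑ i ∈ Finset.Icc (1 : ℤ) ((p : ℤ) - 1),
              (⌊(a * i : ℚ) / p⌋ : ℚ) * (⌊(b * i : ℚ) / p⌋ : ℚ) =
      ((1 - (p : ℚ)) / (6 * a * b * p)) *
          ((a : ℚ) ^ 2 * (2 * p - 1) + (b : ℚ) ^ 2 * (2 * p - 1) - 3 * a * b * p) +
        2 * dedekindSum (a' * b) p :=
  stmt8_general p hp a b a' ha0 hb0 hbp hinv
end

section
/- Let p be prime, 0 < q < p, with negative-regular continued fraction p/q = [e_1,...,e_s], and let q' be the inverse of q mod p with 0 < q' < p. Then 12·s(q,p) - Σ_{i=1}^{s} e_i + 3s = (q + q')/p. -/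
/-- The value of the negative-regular continued fraction
`[e_1,...,e_s] = e_1 - 1/(e_2 - 1/(⋯ - 1/e_s))`. -/
def ncf : List ℤ → ℚ
  | [] => 0
  | [e] => (e : ℚ)
  | e :: f :: rest => (e : ℚ) - 1 / ncf (f :: rest)

/-!
Reciprocity `12hk(s(h,k) + s(k,h)) = h² + k² + 1 - 3hk` is proved in Rademacher's way: for
`0 < i < k` the two sawtooth factors are `i/k - 1/2` and `(hi mod k)/k - 1/2`, multiplication by `h`
permutes the nonzero residues mod `k`, and counting lattice points under the line `y = hx/k` links
`Σ i⌊hi/k⌋` to `Σ j⌊kj/h⌋`.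

The formula then follows by induction on the expansion. If `p/q = a - 1/(q/r)` with `r = aq - p`,
then `s(p,q) = -s(r,q)` by periodicity and oddness, `(qq' - 1)/p` is an inverse of `r` mod `q`, and
reciprocity for `(q,p)` turns the formula for `q/r` into the one for `p/q`.
-/
open Finset

lemma saw_add_intCast (x : ℚ) (n : ℤ) : saw (x + n) = saw x := by
  simp only [saw, Rat.add_intCast_den, Int.floor_add_intCast, Int.cast_add]
  split_ifs <;> ring

lemma saw_eq_fract_sub_half {x : ℚ} (hx : x.den ≠ 1) : saw x = Int.fract x - 1 / 2 := by
  rw [saw, if_neg hx, Int.fract]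

lemma saw_neg (x : ℚ) : saw (-x) = -saw x := by
  by_cases hx : x.den = 1
  · simp [saw, Rat.neg_den, hx]
  have hfract : Int.fract x ≠ 0 := fun h0 => by
    obtain ⟨n, hn⟩ := Int.fract_eq_zero_iff.mp h0
    exact hx (hn ▸ Rat.den_intCast n)
  rw [saw_eq_fract_sub_half hx, saw_eq_fract_sub_half (by rwa [Rat.neg_den]), Int.fract_neg hfract]
  ring

lemma saw_intCast_div {a b : ℤ} (hb : 0 < b) (hab : ¬ b ∣ a) :
    saw ((a : ℚ) / b) = ((a % b : ℤ) : ℚ) / b - 1 / 2 := by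
  have hden : ((a : ℚ) / b).den ≠ 1 := fun h1 => hab <| by
    rw [Rat.den_eq_one_iff, eq_div_iff (by positivity)] at h1
    exact ⟨_, by rw [mul_comm]; exact_mod_cast h1.symm⟩
  lift b to ℕ using hb.le
  rw [saw_eq_fract_sub_half hden, Int.cast_natCast, Int.fract_div_intCast_eq_div_intCast_mod]

lemma dedekindSum_add_mul (h k c : ℤ) : dedekindSum (h + k * c) k = dedekindSum h k := by
  rcases eq_or_ne k 0 with rfl | hk
  · simp [dedekindSum]
  refine sum_congr rfl fun i _ => ?_
  have : (i : ℚ) * ↑(h + k * c) / k = i * h / k + ↑(i * c) := by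
    push_cast
    field_simp
  rw [this, saw_add_intCast]

lemma dedekindSum_neg (h k : ℤ) : dedekindSum (-h) k = -dedekindSum h k := by
  rw [dedekindSum, dedekindSum, ← sum_neg_distrib]
  refine sum_congr rfl fun i _ => ?_
  rw [Int.cast_neg, mul_neg, neg_div, saw_neg, mul_neg]

section Reciprocity

variable {h k : ℤ}

lemma not_dvd_mul_of_mem_Icc (hcop : IsCoprime h k) {i : ℤ} (hi : i ∈ Icc 1 (k - 1)) :
    ¬ k ∣ h * i := fun hdvd => by
  rw [mem_Icc] at hi
  have := Int.le_of_dvd (by omega) (hcop.symm.dvd_of_dvd_mul_left hdvd)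
  omega

lemma mul_emod_mem_Icc (hcop : IsCoprime h k) {i : ℤ} (hi : i ∈ Icc 1 (k - 1)) :
    h * i % k ∈ Icc 1 (k - 1) := by
  have hk : 0 < k := by rw [mem_Icc] at hi; omega
  have hne : h * i % k ≠ 0 := fun h0 =>
    not_dvd_mul_of_mem_Icc hcop hi (Int.dvd_of_emod_eq_zero h0)
  have := Int.emod_nonneg (h * i) hk.ne'
  have := Int.emod_lt_of_pos (h * i) hk
  rw [mem_Icc]; omega

lemma mul_emod_mul_emod {u : ℤ} (hu : u * h ≡ 1 [ZMOD k]) {i : ℤ} (hi : i ∈ Icc 1 (k - 1)) :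
    u * (h * i % k) % k = i := by
  rw [mem_Icc] at hi
  have : u * (h * i % k) ≡ i [ZMOD k] :=
    calc u * (h * i % k) ≡ u * (h * i) [ZMOD k] := (Int.mod_modEq _ _).mul_left _
      _ = (u * h) * i := by ring
      _ ≡ 1 * i [ZMOD k] := hu.mul_right _
      _ = i := one_mul i
  rw [this, Int.emod_eq_of_lt (by omega) (by omega)]

lemma sum_comp_mul_emod {M : Type*} [AddCommMonoid M] (hcop : IsCoprime h k) (f : ℤ → M) :
    ∑ i ∈ Icc 1 (k - 1), f (h * i % k) = ∑ i ∈ Icc 1 (k - 1), f i := by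
  have ⟨u, v, huv⟩ := hcop
  have hu : u * h ≡ 1 [ZMOD k] := Int.modEq_iff_dvd.mpr ⟨v, by linear_combination -huv⟩
  have hu' : h * u ≡ 1 [ZMOD k] := mul_comm u h ▸ hu
  exact sum_nbij' (h * · % k) (u * · % k) (fun i hi => mul_emod_mem_Icc hcop hi)
    (fun i hi => mul_emod_mem_Icc ⟨h, v, by linear_combination huv⟩ hi)
    (fun i hi => mul_emod_mul_emod hu hi) (fun i hi => mul_emod_mul_emod hu' hi) fun _ _ => rfl

lemma two_mul_sum_Icc_one_id {n : ℤ} (hn : 0 ≤ n) : 2 * ∑ i ∈ Icc 1 n, i = n * (n + 1) := by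
  induction n, hn using Int.leInduction with
  | base => rfl
  | succ n hn ih =>
    rw [← insert_Icc_right_eq_Icc_add_one (by omega), sum_insert (by simp), mul_add, ih]
    ring

lemma six_mul_sum_Icc_one_sq {n : ℤ} (hn : 0 ≤ n) :
    6 * ∑ i ∈ Icc 1 n, i ^ 2 = n * (n + 1) * (2 * n + 1) := by
  induction n, hn using Int.leInduction with
  | base => rfl
  | succ n hn ih =>
    rw [← insert_Icc_right_eq_Icc_add_one (by omega), sum_insert (by simp), mul_add, ih]
    ring

lemma sq_add_self_eq_sum_Icc_ite {n m : ℤ} (hn : 0 ≤ n) (hnm : n ≤ m) :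
    n ^ 2 + n = ∑ j ∈ Icc 1 m, if j ≤ n then 2 * j else 0 := by
  have : (Icc 1 m).filter (· ≤ n) = Icc 1 n := by
    ext j; simp only [mem_filter, mem_Icc]; omega
  rw [← sum_filter, this, ← mul_sum, two_mul_sum_Icc_one_id hn]
  ring

/-- Both sides count the lattice points `(i, j)` with `0 < i < k`, `0 < j < h` and `j k < h i`,
with weight `2 j`. -/
lemma sum_sq_ediv_add_sum_ediv (hh : 0 < h) (hk : 0 < k) (hcop : IsCoprime h k) :
    ∑ i ∈ Icc 1 (k - 1), (h * i / k) ^ 2 + ∑ i ∈ Icc 1 (k - 1), h * i / k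
      = 2 * (k - 1) * ∑ j ∈ Icc 1 (h - 1), j
        - 2 * ∑ j ∈ Icc 1 (h - 1), j * (k * j / h) := by
  have hrow : ∀ i ∈ Icc 1 (k - 1), (h * i / k) ^ 2 + h * i / k
      = ∑ j ∈ Icc 1 (h - 1), if j ≤ h * i / k then 2 * j else 0 := by
    intro i hi
    rw [mem_Icc] at hi
    refine sq_add_self_eq_sum_Icc_ite (Int.ediv_nonneg (by nlinarith) hk.le) ?_
    have : h * i / k < h := (Int.ediv_lt_iff_lt_mul hk).mpr (by nlinarith)
    omega
  have hcol : ∀ j ∈ Icc 1 (h - 1),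
      ∑ i ∈ Icc 1 (k - 1), (if j ≤ h * i / k then 2 * j else 0)
      = 2 * j * (k - 1 - k * j / h) := by
    intro j hj
    rw [mem_Icc] at hj
    have hfilter :
        (Icc 1 (k - 1)).filter (fun i => j ≤ h * i / k) = Icc (k * j / h + 1) (k - 1) := by
      ext i
      simp only [mem_filter, mem_Icc]
      constructor
      · rintro ⟨hi, hji⟩
        have hle := (Int.le_ediv_iff_mul_le (by omega)).mp hji
        have hne : j * k ≠ h * i := fun heq =>
          not_dvd_mul_of_mem_Icc hcop (mem_Icc.mpr hi) ⟨j, by rw [← heq, mul_comm]⟩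
        have : k * j / h < i := (Int.ediv_lt_iff_lt_mul hh).mpr (by lia)
        omega
      · rintro ⟨hji, hik⟩
        have hkj : 0 ≤ k * j / h := Int.ediv_nonneg (by nlinarith) hh.le
        have : k * j < i * h := (Int.ediv_lt_iff_lt_mul hh).mp (by omega)
        exact ⟨⟨by omega, hik⟩, (Int.le_ediv_iff_mul_le (by omega)).mpr (by lia)⟩
    have hkj : k * j / h ≤ k - 1 := by
      have : k * j / h < k := (Int.ediv_lt_iff_lt_mul hh).mpr (by nlinarith)
      omega
    rw [← sum_filter, hfilter, sum_const, Int.card_Icc, nsmul_eq_mul,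
      Int.toNat_of_nonneg (by omega)]
    ring
  rw [← sum_add_distrib, sum_congr rfl hrow, sum_comm, sum_congr rfl hcol, mul_sum, mul_sum,
    ← sum_sub_distrib]
  exact sum_congr rfl fun j _ => by ring

lemma mul_sum_ediv (hcop : IsCoprime h k) :
    k * ∑ i ∈ Icc 1 (k - 1), h * i / k = (h - 1) * ∑ i ∈ Icc 1 (k - 1), i := by
  have key := sum_comp_mul_emod hcop id
  simp only [id, Int.emod_def, sum_sub_distrib, ← mul_sum] at key
  linear_combination -key - mul_sum (Icc 1 (k - 1)) (fun i => i) h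

lemma sq_mul_sum_sq_ediv (hcop : IsCoprime h k) :
    k ^ 2 * ∑ i ∈ Icc 1 (k - 1), (h * i / k) ^ 2
      = 2 * h * k * ∑ i ∈ Icc 1 (k - 1), i * (h * i / k)
        - (h ^ 2 - 1) * ∑ i ∈ Icc 1 (k - 1), i ^ 2 := by
  have key := sum_comp_mul_emod hcop (· ^ 2)
  have expand : ∀ i, (h * i - k * (h * i / k)) ^ 2
      = h ^ 2 * i ^ 2 - 2 * h * k * (i * (h * i / k)) + k ^ 2 * (h * i / k) ^ 2 := fun i => by ring
  simp only [Int.emod_def, expand, sum_add_distrib, sum_sub_distrib, ← mul_sum] at key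
  linear_combination key

lemma four_mul_sq_mul_dedekindSum (hk : 0 < k) (hcop : IsCoprime h k) :
    4 * k ^ 2 * dedekindSum h k = ((4 * h * ∑ i ∈ Icc 1 (k - 1), i ^ 2
      - 4 * k * ∑ i ∈ Icc 1 (k - 1), i * (h * i / k) - k ^ 2 * (k - 1) : ℤ) : ℚ) := by
  have hterm : ∀ i ∈ Icc 1 (k - 1),
      4 * (k : ℚ) ^ 2 * (saw ((i : ℚ) / k) * saw ((i * h : ℚ) / k))
      = (((2 * i - k) * (2 * (h * i - k * (h * i / k)) - k) : ℤ) : ℚ) := by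
    intro i hi
    have hki : ¬ k ∣ i := fun hdvd => by
      rw [mem_Icc] at hi
      have := Int.le_of_dvd (by omega) hdvd
      omega
    rw [saw_intCast_div hk hki, show (i * h : ℚ) = ((h * i : ℤ) : ℚ) by push_cast; ring,
      saw_intCast_div hk (not_dvd_mul_of_mem_Icc hcop hi), ← Int.emod_def,
      Int.emod_eq_of_lt (by rw [mem_Icc] at hi; omega) (by rw [mem_Icc] at hi; omega)]
    push_cast
    field_simp
    ring
  rw [dedekindSum, mul_sum, sum_congr rfl hterm, ← Int.cast_sum]
  congr 1
  have expand : ∀ i, (2 * i - k) * (2 * (h * i - k * (h * i / k)) - k)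
      = 4 * h * i ^ 2 - 4 * k * (i * (h * i / k)) - 2 * k * (h + 1) * i + 2 * k ^ 2 * (h * i / k)
        + k ^ 2 := fun i => by ring
  have hcard : ((Icc 1 (k - 1)).card : ℤ) = k - 1 := by simp; omega
  simp only [expand, sum_add_distrib, sum_sub_distrib, ← mul_sum, sum_const, nsmul_eq_mul, hcard]
  linear_combination 2 * k * mul_sum_ediv hcop
    - 2 * k * two_mul_sum_Icc_one_id (show 0 ≤ k - 1 by omega)
    + mul_sum (Icc 1 (k - 1)) (fun i => i) (2 * k * (h + 1))

theorem dedekindSum_reciprocity (hh : 0 < h) (hk : 0 < k) (hcop : IsCoprime h k) :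
    12 * h * k * (dedekindSum h k + dedekindSum k h) = (h ^ 2 + k ^ 2 + 1 - 3 * h * k : ℚ) := by
  have hk_sum := four_mul_sq_mul_dedekindSum hk hcop
  have hh_sum := four_mul_sq_mul_dedekindSum hh hcop.symm
  have hsq := congrArg (Int.cast : ℤ → ℚ) (sq_mul_sum_sq_ediv hcop)
  have hlin := congrArg (Int.cast : ℤ → ℚ) (mul_sum_ediv hcop)
  have hcount := congrArg (Int.cast : ℤ → ℚ) (sum_sq_ediv_add_sum_ediv hh hk hcop)
  have hk1 := congrArg (Int.cast : ℤ → ℚ) (two_mul_sum_Icc_one_id (show 0 ≤ k - 1 by omega))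
  have hk2 := congrArg (Int.cast : ℤ → ℚ) (six_mul_sum_Icc_one_sq (show 0 ≤ k - 1 by omega))
  have hh1 := congrArg (Int.cast : ℤ → ℚ) (two_mul_sum_Icc_one_id (show 0 ≤ h - 1 by omega))
  have hh2 := congrArg (Int.cast : ℤ → ℚ) (six_mul_sum_Icc_one_sq (show 0 ≤ h - 1 by omega))
  push_cast at hk_sum hh_sum hsq hlin hcount hk1 hk2 hh1 hh2
  have hhk : (4 * h * k : ℚ) ≠ 0 := by positivity
  refine mul_left_cancel₀ hhk ?_
  linear_combination 12 * (h : ℚ) ^ 2 * hk_sum + 12 * (k : ℚ) ^ 2 * hh_sum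
    - 24 * (h : ℚ) * ((k : ℚ) ^ 2 * hcount - hsq - k * hlin)
    + (4 * (h : ℚ) ^ 3 + 4 * h) * hk2 + 8 * (k : ℚ) ^ 3 * hh2
    - 24 * (h : ℚ) * k ^ 2 * (k - 1) * hh1 + 12 * (h : ℚ) * k * (h - 1) * hk1

end Reciprocity

lemma ncf_cons (a : ℤ) (l : List ℤ) : ncf (a :: l) = a - (ncf l)⁻¹ := by
  cases l with
  | nil => simp [ncf]
  | cons b l => rw [ncf, one_div]

lemma inv_ncf_nonneg_and_lt_one {l : List ℤ} (h2 : ∀ x ∈ l, 2 ≤ x) :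
    0 ≤ (ncf l)⁻¹ ∧ (ncf l)⁻¹ < 1 := by
  induction l with
  | nil => simp [ncf]
  | cons a l ih =>
    obtain ⟨hx0, hx1⟩ := ih fun x hx => h2 x (List.mem_cons_of_mem a hx)
    have ha : (2 : ℚ) ≤ a := by exact_mod_cast h2 a List.mem_cons_self
    have hlt : 1 < ncf (a :: l) := by rw [ncf_cons]; linarith
    exact ⟨by positivity, inv_lt_one_of_one_lt₀ hlt⟩

lemma ncf_tail_eq_div {a p q : ℤ} {t : List ℤ} (h2 : ∀ x ∈ a :: t, 2 ≤ x) (hp : 0 < p)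
    (hval : ncf (a :: t) = p / q) :
    0 < q ∧ q < p ∧ ncf t = q / (a * q - p : ℤ) := by
  obtain ⟨hx0, hx1⟩ := inv_ncf_nonneg_and_lt_one fun x hx => h2 x (List.mem_cons_of_mem a hx)
  have ha : (2 : ℚ) ≤ a := by exact_mod_cast h2 a List.mem_cons_self
  rw [ncf_cons] at hval
  have hq : 0 < q := by
    have : (0 : ℚ) < p / q := by linarith
    exact_mod_cast (div_pos_iff_of_pos_left (by exact_mod_cast hp)).mp this
  have hqQ : (q : ℚ) ≠ 0 := by positivity
  have hx : (ncf t)⁻¹ = ((a * q - p : ℤ) : ℚ) / q := by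
    have hval' : (a - (ncf t)⁻¹) * q = p := by rw [hval]; field_simp
    rw [eq_div_iff hqQ]
    push_cast
    linear_combination -hval'
  refine ⟨hq, ?_, by rw [← inv_inv (ncf t), hx, inv_div]⟩
  have : (1 : ℚ) < p / q := by linarith
  exact_mod_cast (one_lt_div (by positivity)).mp this

theorem twelve_mul_dedekindSum_of_ncf_eq (e : List ℤ) (h2 : ∀ x ∈ e, 2 ≤ x)
    {p q q' : ℤ} (hq'0 : 0 ≤ q') (hq'p : q' < p) (hinv : q * q' ≡ 1 [ZMOD p])
    (hval : ncf e = p / q) :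
    12 * dedekindSum q p - e.sum + 3 * e.length = (q + q' : ℚ) / p := by
  induction e generalizing p q q' with
  | nil =>
    -- `ncf [] = 0` can only equal `p / q` through the junk value `p / 0 = 0`.
    have hp : 0 < p := by omega
    have hq : q = 0 := by
      rw [ncf, eq_comm, div_eq_zero_iff] at hval
      exact_mod_cast hval.resolve_left (by positivity)
    subst hq
    have hp1 : p = 1 := Int.eq_one_of_dvd_one hp.le (by simpa using Int.ModEq.dvd hinv)
    subst hp1
    have hq' : q' = 0 := by omega
    subst hq'
    simp [dedekindSum]
  | cons a t ih =>
    have h2t : ∀ x ∈ t, 2 ≤ x := fun x hx => h2 x (List.mem_cons_of_mem a hx)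
    obtain ⟨hq, hqp, htail⟩ := ncf_tail_eq_div h2 (by omega) hval
    obtain ⟨c, hc⟩ := Int.ModEq.dvd hinv
    have hm0 : 0 ≤ -c := by nlinarith
    have hmq : -c < q := by nlinarith
    have hinv' : (a * q - p) * -c ≡ 1 [ZMOD q] :=
      Int.modEq_iff_dvd.mpr ⟨a * c + q', by linear_combination hc⟩
    have IH := ih h2t hm0 hmq hinv' htail
    have hrecip :=
      dedekindSum_reciprocity hq (by omega : 0 < p) ⟨q', c, by linear_combination -hc⟩
    have hs : dedekindSum p q = -dedekindSum (a * q - p) q := by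
      rw [← dedekindSum_neg, ← dedekindSum_add_mul (-(a * q - p)) q a]
      congr 1
      ring
    rw [hs] at hrecip
    have hqQ : (q : ℚ) ≠ 0 := by positivity
    rw [eq_div_iff hqQ] at IH
    rw [eq_div_iff (by norm_cast; omega)]
    refine mul_right_cancel₀ hqQ ?_
    simp only [List.sum_cons, List.length_cons]
    have hcQ : (1 - q * q' : ℚ) = p * c := by exact_mod_cast hc
    push_cast at IH hrecip ⊢
    linear_combination hrecip + p * IH + hcQ

theorem stmt15_general (p : ℕ) (q q' : ℤ)
    (hq'0 : 0 < q') (hq'p : q' < p)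
    (hinv : q * q' ≡ 1 [ZMOD (p : ℤ)])
    (e : List ℤ) (h2 : ∀ x ∈ e, 2 ≤ x)
    (hval : ncf e = (p : ℚ) / q) :
    12 * dedekindSum q p - (e.sum : ℚ) + 3 * e.length = ((q : ℚ) + q') / p := by
  exact_mod_cast twelve_mul_dedekindSum_of_ncf_eq e h2 hq'0.le hq'p hinv (by exact_mod_cast hval)

theorem stmt15 (p : ℕ) (hp : p.Prime) (q q' : ℤ)
    (hq0 : 0 < q) (hqp : q < p) (hq'0 : 0 < q') (hq'p : q' < p)
    (hinv : q * q' ≡ 1 [ZMOD (p : ℤ)])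
    (e : List ℤ) (hne : e ≠ []) (h2 : ∀ x ∈ e, 2 ≤ x)
    (hval : ncf e = (p : ℚ) / q) :
    12 * dedekindSum q p - (e.sum : ℚ) + 3 * e.length = ((q : ℚ) + q') / p :=
  stmt15_general p q q' hq'0 hq'p hinv e h2 hval
end
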